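/- arXiv:2109.07772 — 2 statements merged into one kernel-verified Lean document; each statement's English description precedes it below -/
import Mathlib

section
/- Let f be a strongly hyperbolic function and s, t ≠ 0. Then lim_{x→+∞} (f(x+s) − f(x))/(f(x+t) − f(x)) = s/t. -/
open Filter Set Real

/-- A strongly hyperbolic function `f : (0,∞) → (0,∞)`. -/
def StronglyHyperbolic (f : ℝ → ℝ) : Prop :=
  (∀ x ∈ Set.Ioi (0:ℝ), 0 < f x) ∧
  Filter.Tendsto f (nhdsWithin 0 (Set.Ioi 0)) Filter.atTop ∧
  Filter.Tendsto f Filter.atTop (nhds 0) ∧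
  StrictConvexOn ℝ (Set.Ioi 0) f ∧
  (∀ b : ℝ, Filter.Tendsto (fun x => f (x + b) / f x) Filter.atTop (nhds 1)) ∧
  (∀ x ∈ Set.Ioi (0:ℝ), DifferentiableAt ℝ f x) ∧
  StrictConvexOn ℝ (Set.Ioi 0) (fun x => Real.log |deriv f x|)

private lemma div_le_div_neg' {a b c : ℝ} (h : a ≤ b) (hc : c < 0) : b / c ≤ a / c := by
  rw [div_eq_mul_inv, div_eq_mul_inv]
  exact mul_le_mul_of_nonpos_right h (inv_nonpos.2 hc.le)

private lemma shift_diff_mono {G : ℝ → ℝ} (hG : ConvexOn ℝ (Set.Ioi 0) G)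
    {b x y : ℝ} (hb : 0 < b) (hx : 0 < x) (hxy : x ≤ y) :
    G (x + b) - G x ≤ G (y + b) - G y := by
  rcases eq_or_lt_of_le hxy with rfl | hlt
  · exact le_refl _
  have hy : 0 < y := hx.trans hlt
  have h1 : slope G x (x + b) ≤ slope G x (y + b) := by
    have hm := hG.slope_mono (show x ∈ Set.Ioi (0:ℝ) from hx)
    exact hm ⟨show x + b ∈ Set.Ioi (0:ℝ) from by simp; linarith,
        by simp [Set.mem_singleton_iff]; intro h; linarith⟩
      ⟨show y + b ∈ Set.Ioi (0:ℝ) from by simp; linarith,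
        by simp [Set.mem_singleton_iff]; intro h; linarith⟩ (by linarith)
  have h2 : slope G x (y + b) ≤ slope G y (y + b) := by
    have hm := hG.slope_mono (show y + b ∈ Set.Ioi (0:ℝ) from by simp; linarith)
    have h := hm ⟨show x ∈ Set.Ioi (0:ℝ) from hx,
        by simp [Set.mem_singleton_iff]; intro h; linarith⟩
      ⟨show y ∈ Set.Ioi (0:ℝ) from hy,
        by simp [Set.mem_singleton_iff]; intro h; linarith⟩ hxy
    rwa [slope_comm G (y+b) x, slope_comm G (y+b) y] at h
  have h := h1.trans h2
  rw [slope_def_field, slope_def_field] at h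
  have e1 : x + b - x = b := by ring
  have e2 : y + b - y = b := by ring
  rw [e1, e2] at h
  have := (div_le_div_iff₀ hb hb).mp h
  nlinarith

private lemma sh_deriv_neg {f : ℝ → ℝ} (hf : StronglyHyperbolic f) :
    ∀ x ∈ Set.Ioi (0:ℝ), deriv f x < 0 := by
  obtain ⟨hpos, -, h0, hconv, -, hdiff, -⟩ := hf
  intro x0 hx0
  by_contra hcontra
  push_neg at hcontra
  have hmono := hconv.strictMonoOn_deriv hdiff
  set a := x0 + 1 with ha_def
  have hx0' : (0:ℝ) < x0 := hx0
  have ha : a ∈ Set.Ioi (0:ℝ) := by simp [ha_def]; linarith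
  have hDa : 0 < deriv f a := lt_of_le_of_lt hcontra (hmono hx0 ha (by simp [ha_def]))
  have hfa : 0 < f a := hpos a ha
  obtain ⟨b, hb1, hb2⟩ := ((h0.eventually (gt_mem_nhds hfa)).and (eventually_gt_atTop a)).exists
  -- hb1 : f b < f a, hb2 : a < b
  have hbmem : b ∈ Set.Ioi (0:ℝ) := by simp at ha ⊢; linarith
  have hslope := hconv.convexOn.deriv_le_slope ha hbmem hb2 (hdiff a ha)
  rw [slope_def_field] at hslope
  have hba : 0 < b - a := by linarith
  have h2 : 0 < (f b - f a) / (b - a) := lt_of_lt_of_le hDa hslope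
  have := mul_pos h2 hba
  rw [div_mul_cancel₀ _ (ne_of_gt hba)] at this
  linarith

private lemma sh_key_ratio {f : ℝ → ℝ} (hf : StronglyHyperbolic f) {b q : ℝ}
    (hb : 0 < b) (hq0 : 0 < q) (hq1 : q < 1) :
    ∀ᶠ x in atTop, q * (-deriv f x) < -deriv f (x + b) := by
  have hDneg := sh_deriv_neg hf
  obtain ⟨hpos, -, h0, hconv, hratio, hdiff, hlog⟩ := hf
  by_contra hcon
  rw [Filter.not_eventually] at hcon
  -- Step 1: the bad inequality holds everywhere on (0,∞)
  have hall : ∀ x : ℝ, 0 < x → -deriv f (x + b) ≤ q * (-deriv f x) := by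
    intro x hx
    obtain ⟨y, hy1, hy2⟩ := (hcon.and_eventually (eventually_ge_atTop x)).exists
    rw [not_lt] at hy1
    have hy0 : 0 < y := lt_of_lt_of_le hx hy2
    have hDy : deriv f y < 0 := hDneg y hy0
    have hDyb : deriv f (y + b) < 0 := hDneg (y + b) (by simp; linarith)
    have hDx : deriv f x < 0 := hDneg x hx
    have hDxb : deriv f (x + b) < 0 := hDneg (x + b) (by simp; linarith)
    -- pass to logs
    set G : ℝ → ℝ := fun z => Real.log |deriv f z| with hG_def
    have eG : ∀ z : ℝ, deriv f z < 0 → G z = Real.log (-deriv f z) := by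
      intro z hz; simp [hG_def, abs_of_neg hz]
    have hGy : G (y + b) - G y ≤ Real.log q := by
      rw [eG _ hDyb, eG _ hDy]
      have hlogle : Real.log (-deriv f (y + b)) ≤ Real.log (q * (-deriv f y)) :=
        Real.log_le_log (by linarith) hy1
      rw [Real.log_mul (ne_of_gt hq0) (by linarith)] at hlogle
      linarith
    have hGx : G (x + b) - G x ≤ Real.log q :=
      le_trans (shift_diff_mono hlog.convexOn hb hx hy2) hGy
    rw [eG _ hDxb, eG _ hDx] at hGx
    have : Real.log (-deriv f (x + b)) ≤ Real.log (q * (-deriv f x)) := by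
      rw [Real.log_mul (ne_of_gt hq0) (by linarith)]; linarith
    exact (Real.log_le_log_iff (by linarith) (mul_pos hq0 (by linarith))).mp this
  -- Step 2: telescoping gives f (u+b) ≤ f u / (2 - q) for every u > 0
  have hrat_le : ∀ u : ℝ, 0 < u → f (u + b) ≤ f u / (2 - q) := by
    intro u hu
    have hub : (0:ℝ) < u + b := by linarith
    obtain ⟨a0, ha0_def⟩ : ∃ a0 : ℝ, a0 = f u - f (u + b) := ⟨_, rfl⟩
    have ha0pos : 0 < a0 := by
      rw [ha0_def]
      have hs := hconv.convexOn.slope_le_deriv (show u ∈ Set.Ioi (0:ℝ) from hu)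
        (show u + b ∈ Set.Ioi (0:ℝ) from hub) (by linarith) (hdiff _ hub)
      rw [slope_def_field] at hs
      have e : u + b - u = b := by ring
      rw [e] at hs
      have hD := hDneg (u + b) hub
      have := (div_le_iff₀ hb).mp hs
      nlinarith
    -- geometric decay of the derivative
    have hstep : ∀ k : ℕ, -deriv f (u + ((k:ℝ) + 1) * b) ≤ q ^ k * (-deriv f (u + b)) := by
      intro k
      induction k with
      | zero => simp
      | succ n ih =>
        have hx : (0:ℝ) < u + ((n:ℝ) + 1) * b := by
          have h' : (0:ℝ) ≤ ((n:ℝ) + 1) * b := by positivity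
          linarith
        have h1 := hall _ hx
        have e : u + ((n:ℝ) + 1) * b + b = u + (((n:ℝ) + 1) + 1) * b := by ring
        rw [e] at h1
        have h2 : q * (-deriv f (u + ((n:ℝ) + 1) * b)) ≤ q * (q ^ n * (-deriv f (u + b))) :=
          mul_le_mul_of_nonneg_left ih hq0.le
        push_cast
        calc -deriv f (u + (((n:ℝ) + 1) + 1) * b) ≤ q * (q ^ n * (-deriv f (u + b))) :=
              h1.trans h2
          _ = q ^ (n + 1) * (-deriv f (u + b)) := by ring
    -- each increment is geometrically small
    have hak : ∀ k : ℕ, f (u + ((k:ℝ) + 1) * b) - f (u + ((k:ℝ) + 2) * b) ≤ q ^ k * a0 := by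
      intro k
      have hl : (0:ℝ) < u + ((k:ℝ) + 1) * b := by
        have h' : (0:ℝ) ≤ ((k:ℝ) + 1) * b := by positivity
        linarith
      have hr : (0:ℝ) < u + ((k:ℝ) + 2) * b := by
        have h' : (0:ℝ) ≤ ((k:ℝ) + 2) * b := by positivity
        linarith
      have hlt : u + ((k:ℝ) + 1) * b < u + ((k:ℝ) + 2) * b := by nlinarith
      have h1 := hconv.convexOn.deriv_le_slope (show _ ∈ Set.Ioi (0:ℝ) from hl)
        (show _ ∈ Set.Ioi (0:ℝ) from hr) hlt (hdiff _ hl)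
      rw [slope_def_field] at h1
      have e : u + ((k:ℝ) + 2) * b - (u + ((k:ℝ) + 1) * b) = b := by ring
      rw [e] at h1
      have h1' := (le_div_iff₀ hb).mp h1
      -- h1' : deriv f (left) * b ≤ f right - f left
      have h2 : b * (-deriv f (u + b)) ≤ a0 := by
        have hs := hconv.convexOn.slope_le_deriv (show u ∈ Set.Ioi (0:ℝ) from hu)
          (show u + b ∈ Set.Ioi (0:ℝ) from hub) (by linarith) (hdiff _ hub)
        rw [slope_def_field] at hs
        have e2 : u + b - u = b := by ring
        rw [e2] at hs
        have := (div_le_iff₀ hb).mp hs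
        rw [ha0_def]
        nlinarith
      have h3 := hstep k
      have hq : (0:ℝ) ≤ q ^ k := by positivity
      nlinarith [mul_le_mul_of_nonneg_left h2 hq]
    -- telescoping sum bound
    have h1q : (0:ℝ) < 1 - q := by linarith
    have hsum : ∀ N : ℕ, (f (u + b) - f (u + ((N:ℝ) + 1) * b)) * (1 - q) ≤ a0 * (1 - q ^ N) := by
      intro N
      induction N with
      | zero => simp
      | succ n ih =>
        have hkn := hak n
        have e1 : u + (((n:ℝ) + 1) + 1) * b = u + ((n:ℝ) + 2) * b := by ring
        push_cast
        rw [e1]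
        calc (f (u + b) - f (u + ((n:ℝ) + 2) * b)) * (1 - q)
            = (f (u + b) - f (u + ((n:ℝ) + 1) * b)) * (1 - q)
              + (f (u + ((n:ℝ) + 1) * b) - f (u + ((n:ℝ) + 2) * b)) * (1 - q) := by ring
          _ ≤ a0 * (1 - q ^ n) + q ^ n * a0 * (1 - q) :=
              add_le_add ih (mul_le_mul_of_nonneg_right hkn h1q.le)
          _ = a0 * (1 - q ^ (n + 1)) := by ring
    have hbound : ∀ N : ℕ, f (u + b) - f (u + ((N:ℝ) + 1) * b) ≤ a0 / (1 - q) := by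
      intro N
      rw [le_div_iff₀ h1q]
      nlinarith [hsum N, pow_nonneg hq0.le N, ha0pos]
    have hlim : Tendsto (fun N : ℕ => f (u + ((N:ℝ) + 1) * b)) atTop (nhds 0) := by
      apply h0.comp
      apply tendsto_atTop_add_const_left
      have : Tendsto (fun N : ℕ => ((N:ℝ) + 1)) atTop atTop :=
        tendsto_atTop_add_const_right _ _ tendsto_natCast_atTop_atTop
      exact this.atTop_mul_const hb
    have hfin : f (u + b) - 0 ≤ a0 / (1 - q) :=
      le_of_tendsto (tendsto_const_nhds.sub hlim) (Filter.Eventually.of_forall hbound)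
    rw [sub_zero] at hfin
    rw [le_div_iff₀ (by linarith : (0:ℝ) < 2 - q)]
    have hx := (le_div_iff₀ h1q).mp hfin
    rw [ha0_def] at hx
    nlinarith
  -- Step 3: contradiction with f(x+b)/f(x) → 1
  have hev : ∀ᶠ u in atTop, f (u + b) / f u ≤ 1 / (2 - q) := by
    filter_upwards [eventually_gt_atTop (0:ℝ)] with u hu
    have hfu : 0 < f u := hpos u hu
    rw [div_le_div_iff₀ hfu (by linarith : (0:ℝ) < 2 - q)]
    have := hrat_le u hu
    rw [le_div_iff₀ (by linarith : (0:ℝ) < 2 - q)] at this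
    linarith
  have h1le := le_of_tendsto (hratio b) hev
  have : 1 / (2 - q) < 1 := by
    rw [div_lt_one (by linarith : (0:ℝ) < 2 - q)]; linarith
  linarith

private lemma sh_deriv_ratio {f : ℝ → ℝ} (hf : StronglyHyperbolic f) {b : ℝ} (hb : 0 < b) :
    Filter.Tendsto (fun x => deriv f (x + b) / deriv f x) Filter.atTop (nhds 1) := by
  have hDneg := sh_deriv_neg hf
  have hmono := hf.2.2.2.1.strictMonoOn_deriv hf.2.2.2.2.2.1
  refine tendsto_order.2 ⟨?_, ?_⟩
  · intro c hc
    rcases le_or_gt c 0 with hc0 | hc0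
    · filter_upwards [eventually_gt_atTop (0:ℝ)] with x hx
      have h1 : deriv f x < 0 := hDneg x hx
      have h2 : deriv f (x + b) < 0 := hDneg _ (by simp; linarith)
      have : 0 < deriv f (x + b) / deriv f x := div_pos_of_neg_of_neg h2 h1
      linarith
    · filter_upwards [sh_key_ratio hf hb hc0 hc, eventually_gt_atTop (0:ℝ)] with x hkey hx
      have h1 : deriv f x < 0 := hDneg x hx
      rw [show deriv f (x + b) / deriv f x = (-deriv f (x + b)) / (-deriv f x) from
        (neg_div_neg_eq _ _).symm, lt_div_iff₀ (by linarith : (0:ℝ) < -deriv f x)]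
      linarith
  · intro c hc
    filter_upwards [eventually_gt_atTop (0:ℝ)] with x hx
    have h1 : deriv f x < 0 := hDneg x hx
    have hlt : deriv f x < deriv f (x + b) :=
      hmono (Set.mem_Ioi.2 hx) (Set.mem_Ioi.2 (by linarith)) (by linarith)
    have h2 : deriv f (x + b) < 0 := hDneg _ (by simp; linarith)
    have : deriv f (x + b) / deriv f x < 1 := by
      rw [show deriv f (x + b) / deriv f x = (-deriv f (x + b)) / (-deriv f x) from
        (neg_div_neg_eq _ _).symm, div_lt_one (by linarith : (0:ℝ) < -deriv f x)]
      linarith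
    linarith

private lemma sh_slope_ratio {f : ℝ → ℝ} (hf : StronglyHyperbolic f) {s : ℝ} (hs : s ≠ 0) :
    Filter.Tendsto (fun x => (f (x + s) - f x) / (s * deriv f x)) Filter.atTop (nhds 1) := by
  have hDneg := sh_deriv_neg hf
  have hconv := hf.2.2.2.1
  have hdiff := hf.2.2.2.2.2.1
  rcases hs.lt_or_gt with hneg | hpos
  · -- s < 0
    have hb : (0:ℝ) < -s := by linarith
    have h1 := (sh_deriv_ratio hf hb).comp (tendsto_atTop_add_const_right atTop s tendsto_id)
    have h2 : Filter.Tendsto (fun x => deriv f x / deriv f (x + s)) Filter.atTop (nhds 1) := by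
      refine h1.congr fun x => ?_
      simp only [Function.comp, id_eq]
      congr 2
      ring
    have h3 := h2.inv₀ one_ne_zero
    rw [inv_one] at h3
    have hA : Filter.Tendsto (fun x => deriv f (x + s) / deriv f x) Filter.atTop (nhds 1) := by
      refine h3.congr fun x => ?_
      rw [inv_div]
    refine tendsto_of_tendsto_of_tendsto_of_le_of_le' tendsto_const_nhds hA ?_ ?_
    · filter_upwards [eventually_gt_atTop (max 0 (-s))] with x hx
      have hx0 : 0 < x := lt_of_le_of_lt (le_max_left _ _) hx
      have hxs : 0 < x + s := by have := lt_of_le_of_lt (le_max_right _ _) hx; linarith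
      have hDx : deriv f x < 0 := hDneg x hx0
      have hsl := hconv.convexOn.slope_le_deriv (Set.mem_Ioi.2 hxs) (Set.mem_Ioi.2 hx0)
        (by linarith) (hdiff x hx0)
      rw [slope_def_field] at hsl
      have e : (f x - f (x + s)) / (x - (x + s)) = (f (x + s) - f x) / s := by
        rw [show x - (x + s) = -s from by ring, div_neg, ← neg_div, neg_sub]
      rw [e] at hsl
      have := div_le_div_neg' hsl hDx
      rw [div_self (ne_of_lt hDx), div_div] at this
      linarith [this]
    · filter_upwards [eventually_gt_atTop (max 0 (-s))] with x hx
      have hx0 : 0 < x := lt_of_le_of_lt (le_max_left _ _) hx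
      have hxs : 0 < x + s := by have := lt_of_le_of_lt (le_max_right _ _) hx; linarith
      have hDx : deriv f x < 0 := hDneg x hx0
      have hsl := hconv.convexOn.deriv_le_slope (Set.mem_Ioi.2 hxs) (Set.mem_Ioi.2 hx0)
        (by linarith) (hdiff _ hxs)
      rw [slope_def_field] at hsl
      have e : (f x - f (x + s)) / (x - (x + s)) = (f (x + s) - f x) / s := by
        rw [show x - (x + s) = -s from by ring, div_neg, ← neg_div, neg_sub]
      rw [e] at hsl
      have := div_le_div_neg' hsl hDx
      rw [div_div] at this
      linarith [this]
  · -- s > 0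
    have hA : Filter.Tendsto (fun x => deriv f (x + s) / deriv f x) Filter.atTop (nhds 1) :=
      sh_deriv_ratio hf hpos
    refine tendsto_of_tendsto_of_tendsto_of_le_of_le' hA tendsto_const_nhds ?_ ?_
    · filter_upwards [eventually_gt_atTop (0:ℝ)] with x hx0
      have hDx : deriv f x < 0 := hDneg x hx0
      have hsl := hconv.convexOn.slope_le_deriv (Set.mem_Ioi.2 hx0)
        (Set.mem_Ioi.2 (by linarith : (0:ℝ) < x + s)) (by linarith)
        (hdiff _ (Set.mem_Ioi.2 (by linarith : (0:ℝ) < x + s)))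
      rw [slope_def_field, show x + s - x = s from by ring] at hsl
      have := div_le_div_neg' hsl hDx
      rw [div_div] at this
      linarith [this]
    · filter_upwards [eventually_gt_atTop (0:ℝ)] with x hx0
      have hDx : deriv f x < 0 := hDneg x hx0
      have hsl := hconv.convexOn.deriv_le_slope (Set.mem_Ioi.2 hx0)
        (Set.mem_Ioi.2 (by linarith : (0:ℝ) < x + s)) (by linarith) (hdiff x hx0)
      rw [slope_def_field, show x + s - x = s from by ring] at hsl
      have := div_le_div_neg' hsl hDx
      rw [div_self (ne_of_lt hDx), div_div] at this
      linarith [this]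

theorem stmt4 (f : ℝ → ℝ) (hf : StronglyHyperbolic f) (s t : ℝ) (hs : s ≠ 0) (ht : t ≠ 0) :
    Filter.Tendsto (fun x => (f (x + s) - f x) / (f (x + t) - f x)) Filter.atTop (nhds (s / t)) := by
  have hDneg := sh_deriv_neg hf
  have hnum := sh_slope_ratio hf hs
  have hden := sh_slope_ratio hf ht
  have h : Filter.Tendsto
      (fun x => ((f (x + s) - f x) / (s * deriv f x) * s) /
        ((f (x + t) - f x) / (t * deriv f x) * t)) Filter.atTop (nhds ((1 * s) / (1 * t))) :=
    (hnum.mul_const s).div (hden.mul_const t) (by simp [ht])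
  rw [one_mul, one_mul] at h
  refine Filter.Tendsto.congr' ?_ h
  filter_upwards [eventually_gt_atTop (0:ℝ)] with x hx
  have hD : deriv f x ≠ 0 := ne_of_lt (hDneg x hx)
  rcases eq_or_ne (f (x + t) - f x) 0 with h0 | h0
  · simp [h0]
  · field_simp
end

section
/- Let f be a strongly hyperbolic function, a > 0, b > 0, c > 0. Then the function ǧ(x) = a·f(x+b) + c − f(x) on (0,∞) has exactly one root, at which it changes sign. -/
/-!
Since `f` is convex, positive and tends to `0`, we have `f' < 0`, so
`ǧ' x = |f' x| - a * |f' (x + b)|`. Log-convexity of `|f'|` makes `|f' x| / |f' (x + b)|`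
strictly decreasing, so once `ǧ' ≤ 0` it stays negative: `ǧ` increases and then strictly
decreases towards its limit `c > 0`. Hence `ǧ` stays positive after any point where it is
nonnegative, and since `ǧ → -∞` at `0⁺`, the intermediate value theorem yields the unique
sign change.
-/

open Filter Set Real

open Topology

lemma ConvexOn.deriv_neg_of_tendsto_atTop_zero {f : ℝ → ℝ} {a t : ℝ}
    (hf : ConvexOn ℝ (Ioi a) f) (ht : a < t) (hd : DifferentiableAt ℝ f t)
    (hlim : Tendsto f atTop (𝓝 0)) (hpos : 0 < f t) : deriv f t < 0 := by
  by_contra! hderiv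
  have hle : ∀ y, t < y → f t ≤ f y := fun y hty => by
    have hslope := hf.deriv_le_slope ht (ht.trans hty) hty hd
    rw [slope_def_field] at hslope
    have := (le_div_iff₀ (sub_pos.2 hty)).1 (hderiv.trans hslope)
    linarith
  have : f t ≤ 0 := ge_of_tendsto hlim (eventually_gt_atTop t |>.mono hle)
  linarith

lemma StrictConvexOn.strictAntiOn_sub_comp_add {u : ℝ → ℝ} {a b : ℝ}
    (hu : StrictConvexOn ℝ (Ioi a) u) (hb : 0 < b) :
    StrictAntiOn (fun x => u x - u (x + b)) (Ioi a) := by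
  intro x (hx : a < x) y (hy : a < y) hxy
  -- compare the secant slopes through `x` and through `y + b`
  have hxb : a < x + b := by linarith
  have hyb : a < y + b := by linarith
  have h₁ := hu.secant_strict_mono (a := x) hx hxb hyb (by linarith) (by linarith)
    (by linarith : x + b < y + b)
  have h₂ := hu.secant_strict_mono (a := y + b) hyb hx hy (by linarith) (by linarith) hxy
  have e : (u x - u (y + b)) / (x - (y + b)) = (u (y + b) - u x) / (y + b - x) := by
    rw [← neg_sub (u (y + b)), ← neg_sub (y + b), neg_div_neg_eq]
  rw [e] at h₂
  have key := h₁.trans h₂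
  rw [add_sub_cancel_left, sub_add_cancel_left, div_neg, lt_neg, ← neg_div, neg_sub,
    div_lt_div_iff_of_pos_right hb] at key
  linarith

lemma strictAntiOn_div_comp_add_of_strictConvexOn_log {p : ℝ → ℝ} {a b : ℝ}
    (hp : ∀ x ∈ Ioi a, 0 < p x) (hconv : StrictConvexOn ℝ (Ioi a) (fun x => log (p x)))
    (hb : 0 < b) : StrictAntiOn (fun x => p x / p (x + b)) (Ioi a) := by
  intro x (hx : a < x) y (hy : a < y) hxy
  have hpb : ∀ z, a < z → 0 < p (z + b) := fun z hz => hp _ (show a < z + b by linarith)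
  rw [← log_lt_log_iff (div_pos (hp y hy) (hpb y hy)) (div_pos (hp x hx) (hpb x hx)),
    log_div (hp y hy).ne' (hpb y hy).ne', log_div (hp x hx).ne' (hpb x hx).ne']
  exact hconv.strictAntiOn_sub_comp_add hb hx hy hxy

lemma pos_of_nonneg_of_deriv_sign_change {g g' : ℝ → ℝ} {c x y : ℝ}
    (hg : ∀ t, 0 < t → HasDerivAt g (g' t) t)
    (hsign : ∀ s t, 0 < s → s < t → g' s ≤ 0 → g' t < 0)
    (hlim : Tendsto g atTop (𝓝 c)) (hc : 0 < c) (hx : 0 < x) (hxy : x < y) (hgx : 0 ≤ g x) :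
    0 < g y := by
  by_contra! hgy
  obtain ⟨s, ⟨hxs, hsy⟩, hs⟩ := exists_hasDerivAt_eq_slope g g' hxy
    (fun t ht => (hg t (hx.trans_le ht.1)).continuousAt.continuousWithinAt)
    (fun t ht => hg t (hx.trans ht.1))
  have hs_nonpos : g' s ≤ 0 := by
    rw [hs]; exact div_nonpos_of_nonpos_of_nonneg (by linarith) (by linarith)
  have hanti : StrictAntiOn g (Ioi s) := by
    refine strictAntiOn_of_hasDerivWithinAt_neg (f' := g') (convex_Ioi s)
      (fun t ht => (hg t (hx.trans (hxs.trans ht))).continuousAt.continuousWithinAt)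
      (fun t ht => ?_) (fun t ht => ?_) <;> rw [interior_Ioi] at ht
    · exact (hg t (hx.trans (hxs.trans ht))).hasDerivWithinAt
    · exact hsign s t (hx.trans hxs) ht hs_nonpos
  have : c ≤ g y := le_of_tendsto hlim <| (eventually_gt_atTop y).mono fun z hz =>
    (hanti (mem_Ioi.2 hsy) (mem_Ioi.2 (hsy.trans hz)) hz).le
  linarith

lemma exists_sign_change_of_crossing {g : ℝ → ℝ} {c : ℝ} (hcont : ContinuousOn g (Ioi 0))
    (h₀ : Tendsto g (𝓝[>] 0) atBot) (hlim : Tendsto g atTop (𝓝 c)) (hc : 0 < c)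
    (hcross : ∀ x y, 0 < x → x < y → 0 ≤ g x → 0 < g y) :
    ∃ x₀ > (0:ℝ), g x₀ = 0 ∧ (∀ x, 0 < x → x < x₀ → g x < 0) ∧ (∀ x, x₀ < x → 0 < g x) := by
  obtain ⟨ε, hgε, hε⟩ :=
    ((h₀.eventually (eventually_lt_atBot 0)).and self_mem_nhdsWithin).exists
  obtain ⟨q, hgq, hεq⟩ := ((hlim.eventually_const_lt hc).and (eventually_gt_atTop ε)).exists
  obtain ⟨x₀, ⟨hεx₀, -⟩, hgx₀⟩ := intermediate_value_Ioo hεq.le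
    (hcont.mono fun t ht => hε.trans_le ht.1) ⟨hgε, hgq⟩
  have hx₀ : 0 < x₀ := hε.trans hεx₀
  refine ⟨x₀, hx₀, hgx₀, fun x hx hxx₀ => ?_, fun x hx => hcross x₀ x hx₀ hx hgx₀.ge⟩
  by_contra! hgx
  exact (hcross x x₀ hx hxx₀ hgx).ne' hgx₀

/-- The function `ǧ` of the paper. -/
def shiftedGap (f : ℝ → ℝ) (a b c : ℝ) (x : ℝ) : ℝ := a * f (x + b) + c - f x

namespace StronglyHyperbolic

variable {f : ℝ → ℝ}

lemma deriv_neg (hf : StronglyHyperbolic f) {x : ℝ} (hx : 0 < x) : deriv f x < 0 := by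
  obtain ⟨hpos, -, hlim, hconv, -, hdiff, -⟩ := hf
  exact hconv.convexOn.deriv_neg_of_tendsto_atTop_zero hx (hdiff x hx) hlim (hpos x hx)

lemma hasDerivAt_shiftedGap (hf : StronglyHyperbolic f) (a c : ℝ) {b t : ℝ} (hb : 0 ≤ b)
    (ht : 0 < t) : HasDerivAt (shiftedGap f a b c) (a * deriv f (t + b) - deriv f t) t := by
  obtain ⟨-, -, -, -, -, hdiff, -⟩ := hf
  have hshift : HasDerivAt (fun x => f (x + b)) (deriv f (t + b)) t := by
    simpa using (hdiff (t + b) (show 0 < t + b by linarith)).hasDerivAt.comp_add_const t b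
  exact ((hshift.const_mul a).add_const c).sub (hdiff t ht).hasDerivAt

lemma deriv_shiftedGap_neg_of_nonpos (hf : StronglyHyperbolic f) {a b s t : ℝ} (hb : 0 < b)
    (hs : 0 < s) (hst : s < t) (hle : a * deriv f (s + b) - deriv f s ≤ 0) :
    a * deriv f (t + b) - deriv f t < 0 := by
  have habs_pos : ∀ x, 0 < x → 0 < |deriv f x| := fun x hx => abs_pos.2 (hf.deriv_neg hx).ne
  have habs : ∀ x, 0 < x →
      a * deriv f (x + b) - deriv f x = |deriv f x| - a * |deriv f (x + b)| := fun x hx => by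
    rw [abs_of_neg (hf.deriv_neg hx), abs_of_neg (hf.deriv_neg (by linarith))]; ring
  obtain ⟨-, -, -, -, -, -, hlogconv⟩ := hf
  have hratio := strictAntiOn_div_comp_add_of_strictConvexOn_log (p := fun x => |deriv f x|)
    habs_pos hlogconv hb hs (hs.trans hst) hst
  rw [habs s hs] at hle
  rw [habs t (hs.trans hst)]
  have hs_ratio : |deriv f s| / |deriv f (s + b)| ≤ a := by
    rw [div_le_iff₀ (habs_pos _ (by linarith))]; linarith
  have := (div_lt_iff₀ (habs_pos _ (by linarith))).1 (hratio.trans_le hs_ratio)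
  linarith

lemma tendsto_shiftedGap_nhdsGT_zero (hf : StronglyHyperbolic f) {a b : ℝ} (c : ℝ)
    (hb : 0 < b) : Tendsto (shiftedGap f a b c) (𝓝[>] 0) atBot := by
  obtain ⟨-, h₀, -, -, -, hdiff, -⟩ := hf
  have hshift : Tendsto (fun x => a * f (x + b) + c) (𝓝[>] 0) (𝓝 (a * f b + c)) := by
    have := (hdiff b hb).continuousAt.tendsto.comp
      ((continuous_add_const b).tendsto' 0 b (zero_add b))
    exact ((this.mono_left nhdsWithin_le_nhds).const_mul a).add_const c
  exact hshift.add_atBot (tendsto_neg_atTop_atBot.comp h₀) |>.congr fun x => by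
    simp [shiftedGap, sub_eq_add_neg]

lemma tendsto_shiftedGap_atTop (hf : StronglyHyperbolic f) (a b c : ℝ) :
    Tendsto (shiftedGap f a b c) atTop (𝓝 c) := by
  obtain ⟨-, -, hlim, -, -, -, -⟩ := hf
  have hshift : Tendsto (fun x => f (x + b)) atTop (𝓝 0) :=
    hlim.comp (tendsto_atTop_add_const_right _ b tendsto_id)
  have h := ((hshift.const_mul a).add_const c).sub hlim
  rwa [mul_zero, zero_add, sub_zero] at h

end StronglyHyperbolic

theorem stmt9_general (f : ℝ → ℝ) (hf : StronglyHyperbolic f) (a b c : ℝ) (hb : 0 < b)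
    (hc : 0 < c) :
    ∃ x₀ > (0:ℝ), a * f (x₀ + b) + c - f x₀ = 0 ∧
      (∀ x, 0 < x → x < x₀ → a * f (x + b) + c - f x < 0) ∧
      (∀ x, x₀ < x → 0 < a * f (x + b) + c - f x) := by
  have hderiv : ∀ t, 0 < t → HasDerivAt (shiftedGap f a b c) _ t :=
    fun t ht => hf.hasDerivAt_shiftedGap a c hb.le ht
  have hlim := hf.tendsto_shiftedGap_atTop a b c
  exact exists_sign_change_of_crossing (g := shiftedGap f a b c)
    (fun t ht => (hderiv t ht).continuousAt.continuousWithinAt)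
    (hf.tendsto_shiftedGap_nhdsGT_zero c hb) hlim hc fun x y hx hxy =>
    pos_of_nonneg_of_deriv_sign_change hderiv
      (fun s t hs hst => hf.deriv_shiftedGap_neg_of_nonpos hb hs hst) hlim hc hx hxy

theorem stmt9 (f : ℝ → ℝ) (hf : StronglyHyperbolic f) (a b c : ℝ) (ha : 0 < a) (hb : 0 < b)
    (hc : 0 < c) :
    ∃ x₀ > (0:ℝ), a * f (x₀ + b) + c - f x₀ = 0 ∧
      (∀ x, 0 < x → x < x₀ → a * f (x + b) + c - f x < 0) ∧
      (∀ x, x₀ < x → 0 < a * f (x + b) + c - f x) :=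
  stmt9_general f hf a b c hb hc
end
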